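/- Let q, β > 0 and f : ℝ → ℝ be bounded and continuous. Then for every θ > 0 and n ∈ ℕ, ω(B*_n(f), θ) ≤ ω(f, θ), where B*_n is the Kantorovich-type convolution operator. -/

import Mathlib

open MeasureTheory Filter Real

noncomputable def nu (q β x : ℝ) : ℝ :=
  (1 - q * Real.exp (-β * x)) / (1 + q * Real.exp (-β * x))

noncomputable def G (q β x : ℝ) : ℝ := (1/4) * (nu q β (x+1) - nu q β (x-1))

noncomputable def Psi (q β x : ℝ) : ℝ := (G q β x + G (1/q) β x) / 2

noncomputable def omega (f : ℝ → ℝ) (θ : ℝ) : ℝ :=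
  sSup {d : ℝ | ∃ x y : ℝ, |x - y| ≤ θ ∧ d = |f x - f y|}

noncomputable def supNorm (f : ℝ → ℝ) : ℝ := ⨆ x : ℝ, |f x|

noncomputable def Bstar (q β : ℝ) (n : ℕ) (f : ℝ → ℝ) (x : ℝ) : ℝ :=
  (n : ℝ) * ∫ h : ℝ, (∫ t in (0:ℝ)..(1 / n), f (t + x - h / n)) * Psi q β h

/-!
`B*_n f (x)` is an average of the translates `f (x + s)` against a probability measure: the mean
`n ∫_0^{1/n}` composed with the kernel `Ψ ≥ 0`, whose integral is `1`. Hence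
`|B*_n f x - B*_n f y| ≤ sup_s |f (x + s) - f (y + s)| ≤ ω(f, θ)` whenever `|x - y| ≤ θ`.

`∫ Ψ = 1` because `Ψ` is even, so `∫ Ψ = ∫_0^∞ (G_q + G_{1/q})`, and `G_q` has the explicit
primitive `(log (1 + q e^{-β(x+1)}) - log (1 + q e^{-β(x-1)})) / (2β)`, which vanishes at `+∞`;
its values at `0` for `q` and `1/q` add up to `-1`.
-/

open Set Topology

section Omega

variable {f : ℝ → ℝ} {θ : ℝ}

variable (f θ) in
lemma omega_nonneg : 0 ≤ omega f θ :=
  Real.sSup_nonneg (by rintro _ ⟨x, y, -, rfl⟩; exact abs_nonneg _)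

lemma abs_sub_le_omega {M x y : ℝ} (hM : ∀ z, |f z| ≤ M) (hxy : |x - y| ≤ θ) :
    |f x - f y| ≤ omega f θ := by
  refine le_csSup ⟨M + M, ?_⟩ ⟨x, y, hxy, rfl⟩
  rintro _ ⟨a, b, -, rfl⟩
  exact (abs_sub _ _).trans (add_le_add (hM a) (hM b))

lemma omega_le {C : ℝ} (hC : 0 ≤ C) (h : ∀ x y, |x - y| ≤ θ → |f x - f y| ≤ C) :
    omega f θ ≤ C :=
  Real.sSup_le (by rintro _ ⟨x, y, hxy, rfl⟩; exact h x y hxy) hC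

end Omega

lemma abs_integral_mul_sub_integral_mul_le {α : Type*} [MeasurableSpace α] {μ : Measure α}
    {K u v : α → ℝ} {C : ℝ} (hK : ∀ a, 0 ≤ K a) (hK1 : ∫ a, K a ∂μ = 1)
    (hu : Integrable (fun a => u a * K a) μ) (hv : Integrable (fun a => v a * K a) μ)
    (huv : ∀ a, |u a - v a| ≤ C) :
    |∫ a, u a * K a ∂μ - ∫ a, v a * K a ∂μ| ≤ C := by
  have hKint : Integrable K μ := Integrable.of_integral_ne_zero (by rw [hK1]; exact one_ne_zero)
  calc |∫ a, u a * K a ∂μ - ∫ a, v a * K a ∂μ|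
        = ‖∫ a, (u a - v a) * K a ∂μ‖ := by
        rw [← integral_sub hu hv, Real.norm_eq_abs]
        simp only [sub_mul]
    _ ≤ ∫ a, C * K a ∂μ := by
        refine norm_integral_le_of_norm_le (hKint.const_mul C) (ae_of_all _ fun a => ?_)
        rw [norm_mul, Real.norm_eq_abs, Real.norm_eq_abs, abs_of_nonneg (hK a)]
        exact mul_le_mul_of_nonneg_right (huv a) (hK a)
    _ = C := by rw [integral_const_mul, hK1, mul_one]

section Kernel

variable {q β : ℝ}

lemma nu_monotone (hq : 0 < q) (hβ : 0 < β) : Monotone (nu q β) := by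
  intro a b hab
  have hexp : exp (-β * b) ≤ exp (-β * a) := exp_le_exp.2 (by nlinarith)
  rw [nu, nu, div_le_div_iff₀ (by positivity) (by positivity)]
  nlinarith [exp_pos (-β * a), exp_pos (-β * b)]

lemma G_nonneg (hq : 0 < q) (hβ : 0 < β) (x : ℝ) : 0 ≤ G q β x := by
  have := nu_monotone hq hβ (show x - 1 ≤ x + 1 by linarith)
  rw [G]
  linarith

lemma Psi_nonneg (hq : 0 < q) (hβ : 0 < β) (x : ℝ) : 0 ≤ Psi q β x := by
  have := G_nonneg hq hβ x
  have := G_nonneg (one_div_pos.2 hq) hβ x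
  rw [Psi]
  linarith

lemma nu_neg (hq : 0 < q) (x : ℝ) : nu q β (-x) = -nu q⁻¹ β x := by
  have hexp : exp (-β * -x) = (exp (-β * x))⁻¹ := by rw [← exp_neg]; ring_nf
  have hexp_pos := exp_pos (-β * x)
  rw [nu, nu, hexp]
  field_simp
  ring

lemma G_neg (hq : 0 < q) (x : ℝ) : G q β (-x) = G q⁻¹ β x := by
  rw [G, G, show -x + 1 = -(x - 1) by ring, show -x - 1 = -(x + 1) by ring, nu_neg hq, nu_neg hq]
  ring

lemma Psi_neg (hq : 0 < q) (x : ℝ) : Psi q β (-x) = Psi q β x := by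
  rw [Psi, Psi, one_div, G_neg hq, G_neg (inv_pos.2 hq), inv_inv]
  ring

lemma Psi_abs (hq : 0 < q) (x : ℝ) : Psi q β |x| = Psi q β x := by
  rcases abs_choice x with h | h <;> rw [h]
  exact Psi_neg hq x

noncomputable def nuLog (q β x : ℝ) : ℝ := log (1 + q * exp (-β * x))

lemma hasDerivAt_nuLog (hq : 0 < q) (x : ℝ) :
    HasDerivAt (nuLog q β) (β * (nu q β x - 1) / 2) x := by
  have hexp : HasDerivAt (fun x => 1 + q * exp (-β * x)) (q * (exp (-β * x) * -β)) x := by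
    simpa using ((((hasDerivAt_id x).const_mul (-β)).exp).const_mul q).const_add 1
  have hpos : 0 < 1 + q * exp (-β * x) := by positivity
  convert hexp.log hpos.ne' using 1
  · rfl
  unfold nu
  field_simp
  ring

lemma tendsto_nuLog_atTop (hβ : 0 < β) : Tendsto (nuLog q β) atTop (𝓝 0) := by
  have hlin : Tendsto (fun x => -β * x) atTop atBot :=
    tendsto_id.const_mul_atTop_of_neg (neg_neg_of_pos hβ)
  have h : Tendsto (fun x => 1 + q * exp (-β * x)) atTop (𝓝 1) := by
    simpa using ((tendsto_exp_atBot.comp hlin).const_mul q).const_add 1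
  have := (continuousAt_log one_ne_zero).tendsto.comp h
  rwa [log_one] at this

noncomputable def Gprimitive (q β x : ℝ) : ℝ :=
  (nuLog q β (x + 1) - nuLog q β (x - 1)) / (2 * β)

lemma hasDerivAt_Gprimitive (hq : 0 < q) (hβ : 0 < β) (x : ℝ) :
    HasDerivAt (Gprimitive q β) (G q β x) x := by
  have h := (((hasDerivAt_nuLog (β := β) hq (x + 1)).comp_add_const x 1).sub
    ((hasDerivAt_nuLog (β := β) hq (x - 1)).comp_sub_const x 1)).div_const (2 * β)
  refine h.congr_deriv ?_
  unfold G
  field_simp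
  ring

lemma tendsto_Gprimitive_atTop (hβ : 0 < β) : Tendsto (Gprimitive q β) atTop (𝓝 0) := by
  have hshift (c : ℝ) : Tendsto (fun x => nuLog q β (x + c)) atTop (𝓝 0) :=
    (tendsto_nuLog_atTop hβ).comp (tendsto_atTop_add_const_right _ c tendsto_id)
  have h := ((hshift 1).sub (hshift (-1))).div_const (2 * β)
  simp only [zero_div, sub_zero, ← sub_eq_add_neg] at h
  exact h

lemma integrableOn_Ioi_G (hq : 0 < q) (hβ : 0 < β) : IntegrableOn (G q β) (Ioi 0) :=
  integrableOn_Ioi_deriv_of_nonneg' (fun x _ => hasDerivAt_Gprimitive hq hβ x)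
    (fun x _ => G_nonneg hq hβ x) (tendsto_Gprimitive_atTop hβ)

lemma integral_Ioi_G (hq : 0 < q) (hβ : 0 < β) :
    ∫ x in Ioi 0, G q β x = -Gprimitive q β 0 := by
  rw [integral_Ioi_of_hasDerivAt_of_tendsto' (fun x _ => hasDerivAt_Gprimitive hq hβ x)
    (integrableOn_Ioi_G hq hβ) (tendsto_Gprimitive_atTop hβ), zero_sub]

lemma nuLog_one (hq : 0 < q) : nuLog q β 1 = -β + log q + nuLog q⁻¹ β (-1) := by
  have h : 1 + q * exp (-β * 1) = exp (-β) * q * (1 + q⁻¹ * exp (-β * -1)) := by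
    rw [mul_one, mul_neg_one, neg_neg, exp_neg]
    field_simp
    ring
  rw [nuLog, nuLog, h, log_mul (by positivity) (by positivity), log_mul (by positivity) hq.ne',
    log_exp]

lemma Gprimitive_zero_add_inv (hq : 0 < q) (hβ : 0 < β) :
    Gprimitive q β 0 + Gprimitive q⁻¹ β 0 = -1 := by
  have h1 := nuLog_one (β := β) hq
  have h2 := nuLog_one (β := β) (inv_pos.2 hq)
  rw [inv_inv, log_inv] at h2
  simp only [Gprimitive, zero_add, zero_sub]
  rw [h1, h2]
  field_simp
  ring

lemma integral_Psi (hq : 0 < q) (hβ : 0 < β) : ∫ x, Psi q β x = 1 := by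
  have hq' : 0 < 1 / q := one_div_pos.2 hq
  have habs : ∫ x, Psi q β x = ∫ x, Psi q β |x| := by simp only [Psi_abs hq]
  rw [habs, integral_comp_abs]
  simp only [Psi]
  rw [integral_div, integral_add (integrableOn_Ioi_G hq hβ) (integrableOn_Ioi_G hq' hβ),
    integral_Ioi_G hq hβ, integral_Ioi_G hq' hβ, one_div, ← neg_add,
    Gprimitive_zero_add_inv hq hβ]
  ring

lemma integrable_Psi (hq : 0 < q) (hβ : 0 < β) : Integrable (Psi q β) :=
  Integrable.of_integral_ne_zero (by rw [integral_Psi hq hβ]; exact one_ne_zero)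

end Kernel

section Bstar

variable {q β : ℝ} {f : ℝ → ℝ}

lemma continuous_integral_comp_sub (hf : Continuous f) (n : ℕ) (z : ℝ) :
    Continuous fun h : ℝ => ∫ t in (0 : ℝ)..1 / n, f (t + z - h / n) :=
  intervalIntegral.continuous_parametric_intervalIntegral_of_continuous'
    (f := fun h t => f (t + z - h / n)) (hf.comp (by fun_prop)) _ _

lemma abs_Bstar_sub_le {n : ℕ} {M x y C : ℝ} (hq : 0 < q) (hβ : 0 < β) (hf : Continuous f)
    (hM : ∀ z, |f z| ≤ M) (hC : ∀ s, |f (s + x) - f (s + y)| ≤ C) :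
    |Bstar q β n f x - Bstar q β n f y| ≤ C := by
  rcases n.eq_zero_or_pos with rfl | hn
  · simpa [Bstar] using (abs_nonneg _).trans (hC 0)
  have hn' : (0 : ℝ) < n := Nat.cast_pos.2 hn
  set u : ℝ → ℝ → ℝ := fun z h => ∫ t in (0 : ℝ)..1 / n, f (t + z - h / n) with hu
  have hint : ∀ z, Integrable fun h => u z h * Psi q β h :=
    fun z => (integrable_Psi hq hβ).bdd_mul (c := M * |1 / (n : ℝ) - 0|)
      (continuous_integral_comp_sub hf n z).aestronglyMeasurable
      (ae_of_all _ fun h => intervalIntegral.norm_integral_le_of_norm_le_const fun t _ => hM _)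
  have hdiff : ∀ h, |u x h - u y h| ≤ C * |1 / (n : ℝ) - 0| := fun h => by
    have hii : ∀ z, IntervalIntegrable (fun t => f (t + z - h / n)) volume 0 (1 / n) :=
      fun z => (hf.comp (by fun_prop)).intervalIntegrable _ _
    rw [hu, ← intervalIntegral.integral_sub (hii x) (hii y)]
    refine (Real.norm_eq_abs _).symm.trans_le
      (intervalIntegral.norm_integral_le_of_norm_le_const fun t _ => ?_)
    simpa only [Real.norm_eq_abs, sub_add_eq_add_sub, add_comm t] using hC (t - h / n)
  calc |Bstar q β n f x - Bstar q β n f y|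
      = n * |(∫ h, u x h * Psi q β h) - ∫ h, u y h * Psi q β h| := by
        rw [Bstar, Bstar, ← mul_sub, abs_mul, abs_of_pos hn']
    _ ≤ n * (C * |1 / (n : ℝ) - 0|) := by
        gcongr
        exact abs_integral_mul_sub_integral_mul_le (Psi_nonneg hq hβ) (integral_Psi hq hβ)
          (hint x) (hint y) hdiff
    _ = C := by
        rw [sub_zero, abs_of_pos (by positivity)]
        field_simp

end Bstar

theorem Bstar_global_smoothness_general (q β : ℝ) (hq : 0 < q) (hβ : 0 < β) (n : ℕ)
    (f : ℝ → ℝ) (hf : Continuous f) (hfb : ∃ M : ℝ, ∀ x : ℝ, |f x| ≤ M)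
    (θ : ℝ) :
    omega (Bstar q β n f) θ ≤ omega f θ := by
  obtain ⟨M, hM⟩ := hfb
  refine omega_le (omega_nonneg f θ) fun x y hxy => abs_Bstar_sub_le hq hβ hf hM fun s => ?_
  exact abs_sub_le_omega hM (by rwa [add_sub_add_left_eq_sub])

theorem Bstar_global_smoothness (q β : ℝ) (hq : 0 < q) (hβ : 0 < β) (n : ℕ)
    (f : ℝ → ℝ) (hf : Continuous f) (hfb : ∃ M : ℝ, ∀ x : ℝ, |f x| ≤ M)
    (θ : ℝ) (hθ : 0 < θ) :
    omega (Bstar q β n f) θ ≤ omega f θ :=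
  Bstar_global_smoothness_general q β hq hβ n f hf hfb θ
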